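/- Suppose L is generic, satisfies the triangle inequality, and s₂ + s₃ > (l_1 + … + l_n)/2. Then any two vertices of Γ(L) lying in the same connected component of Γ(L) are joined by a path in Γ(L) of length at most 7. -/

import Mathlib

open Finset

/-- `I ⊆ [n]` is *short*: the sum of its lengths is less than that of its complement. -/
def ShortSet {n : ℕ} (L : Fin n → ℝ) (I : Finset (Fin n)) : Prop :=
  ∑ i ∈ I, L i < ∑ i ∈ Iᶜ, L i

/-- `I ⊆ [n]` is *long*: the sum of its lengths is greater than that of its complement. -/
def LongSet {n : ℕ} (L : Fin n → ℝ) (I : Finset (Fin n)) : Prop :=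
  ∑ i ∈ Iᶜ, L i < ∑ i ∈ I, L i

/-- The length vector `L` is *generic*. -/
def GenericVec {n : ℕ} (L : Fin n → ℝ) : Prop :=
  ∀ I : Finset (Fin n), ∑ i ∈ I, L i ≠ ∑ i ∈ Iᶜ, L i

/-- `L` satisfies the triangle inequality: every singleton is short. -/
def TriangleIneq {n : ℕ} (L : Fin n → ℝ) : Prop :=
  ∀ i : Fin n, ShortSet L {i}

/-- Ordered triples of subsets of `[n]`. -/
abbrev LTriple (n : ℕ) := Finset (Fin n) × Finset (Fin n) × Finset (Fin n)

/-- An ordered triple `(I, J, K)` representing a vertex of `Γ(L)`: three pairwise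
disjoint nonempty short sets whose union is `[n]`. -/
def IsVertex {n : ℕ} (L : Fin n → ℝ) (V : LTriple n) : Prop :=
  V.1.Nonempty ∧ V.2.1.Nonempty ∧ V.2.2.Nonempty ∧
  ShortSet L V.1 ∧ ShortSet L V.2.1 ∧ ShortSet L V.2.2 ∧
  Disjoint V.1 V.2.1 ∧ Disjoint V.1 V.2.2 ∧ Disjoint V.2.1 V.2.2 ∧
  V.1 ∪ V.2.1 ∪ V.2.2 = Finset.univ

/-- Cyclic rotation of an ordered triple. -/
def rotT {n : ℕ} (V : LTriple n) : LTriple n := (V.2.1, V.2.2, V.1)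

/-- Two ordered triples represent the same cyclically ordered partition
(`(I,J,K)`, `(J,K,I)` and `(K,I,J)` are identified). -/
def CyclEq {n : ℕ} (V W : LTriple n) : Prop :=
  W = V ∨ W = rotT V ∨ W = rotT (rotT V)

/-- The mirror image of the vertex `(I, J, K)` is the vertex `(J, I, K)`. -/
def mirrorT {n : ℕ} (V : LTriple n) : LTriple n := (V.2.1, V.1, V.2.2)

/-- The elementary move on representatives: shift a nonempty proper subset
`S ⊊ I` to the second part, provided `J ∪ S` stays short. -/
def MoveStep {n : ℕ} (L : Fin n → ℝ) (V W : LTriple n) : Prop :=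
  ∃ S : Finset (Fin n), S.Nonempty ∧ S ⊂ V.1 ∧ ShortSet L (V.2.1 ∪ S) ∧
    W = (V.1 \ S, V.2.1 ∪ S, V.2.2)

/-- Adjacency in `Γ(L)`: one of the two vertices has a representative from which an
elementary move leads to a representative of the other. -/
def GammaAdj {n : ℕ} (L : Fin n → ℝ) (V W : LTriple n) : Prop :=
  (∃ V' W' : LTriple n, CyclEq V V' ∧ MoveStep L V' W' ∧ CyclEq W W') ∨
  (∃ W' V' : LTriple n, CyclEq W W' ∧ MoveStep L W' V' ∧ CyclEq V V')

/-- There is a path of length `m` (i.e. with `m` consecutive edges) in `Γ(L)`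
from the vertex `V` to the vertex `W`. -/
def GammaPath {n : ℕ} (L : Fin n → ℝ) (m : ℕ) (V W : LTriple n) : Prop :=
  ∃ f : ℕ → LTriple n, CyclEq V (f 0) ∧ CyclEq W (f m) ∧
    (∀ i ≤ m, IsVertex L (f i)) ∧ ∀ i < m, GammaAdj L (f i) (f (i + 1))

/-- The list of lengths sorted in nonincreasing order. -/
noncomputable def sortedDesc {n : ℕ} (L : Fin n → ℝ) : List ℝ :=
  List.insertionSort (· ≥ ·) (List.ofFn L)

/-- The second largest length (with multiplicity). -/
noncomputable def s2 {n : ℕ} (L : Fin n → ℝ) : ℝ := (sortedDesc L).getD 1 0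

/-- The third largest length (with multiplicity). -/
noncomputable def s3 {n : ℕ} (L : Fin n → ℝ) : ℝ := (sortedDesc L).getD 2 0

/-! The hypothesis `s₂ + s₃ > (l₁ + ⋯ + lₙ)/2` yields three indices `a, b, c`, any two of
which are too long to lie in a common short set. So in every vertex they occupy the three
different parts, and no move carries one of them: it would end up in the short set `J ∪ S`
together with the one of them already in the receiving part `J`. Hence the cyclic order in which
`a, b, c` sit is constant on each component of `Γ(L)`. Conversely, every vertex with `a, b, c` in
that cyclic order reaches `({a}, {b}, {a, b}ᶜ)` in at most two moves, shrinking first the part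
of `a` to `{a}` and then the part of `b` to `{b}`; so two vertices of one component are at
distance at most 4. -/

variable {n : ℕ} {L : Fin n → ℝ}

lemma sortedDesc_perm (L : Fin n → ℝ) : (sortedDesc L).Perm (List.ofFn L) :=
  List.perm_insertionSort _ _

lemma length_sortedDesc (L : Fin n → ℝ) : (sortedDesc L).length = n := by
  rw [(sortedDesc_perm L).length_eq, List.length_ofFn]

lemma getD_sortedDesc_le {j k : ℕ} (hjk : j ≤ k) (hk : k < n) :
    (sortedDesc L).getD k 0 ≤ (sortedDesc L).getD j 0 := by
  have hk' : k < (sortedDesc L).length := (length_sortedDesc L).symm ▸ hk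
  rw [List.getD_eq_getElem _ _ hk', List.getD_eq_getElem _ _ (hjk.trans_lt hk')]
  rcases hjk.lt_or_eq with hjk | rfl
  · exact List.pairwise_iff_getElem.1 (List.pairwise_insertionSort (· ≥ ·) (List.ofFn L))
      j k _ _ hjk
  · rfl

lemma card_filter_le_eq_countP (r : ℝ) :
    #{i | r ≤ L i} = (sortedDesc L).countP (fun x => decide (r ≤ x)) := by
  rw [(sortedDesc_perm L).countP_eq, ← Multiset.coe_countP, ← Fin.univ_val_map,
    Multiset.countP_map]
  rfl

lemma lt_card_filter_getD_sortedDesc_le {k : ℕ} (hk : k < n) :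
    k < #{i | (sortedDesc L).getD k 0 ≤ L i} := by
  have hk' : k < (sortedDesc L).length := (length_sortedDesc L).symm ▸ hk
  rw [card_filter_le_eq_countP]
  calc k < ((sortedDesc L).take (k + 1)).length := by rw [List.length_take]; omega
    _ = ((sortedDesc L).take (k + 1)).countP (fun x => decide ((sortedDesc L).getD k 0 ≤ x)) := by
        symm
        rw [List.countP_eq_length]
        intro x hx
        obtain ⟨j, hj, rfl⟩ := List.mem_take_iff_getElem.1 hx
        rw [← List.getD_eq_getElem _ 0]
        simpa using getD_sortedDesc_le (by omega) hk
    _ ≤ _ := (List.take_sublist _ _).countP_le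

lemma exists_s2_add_s3_le_add (hn : 3 ≤ n) :
    ∃ a b c : Fin n, a ≠ b ∧ a ≠ c ∧ b ≠ c ∧
      s2 L + s3 L ≤ L a + L b ∧ s2 L + s3 L ≤ L a + L c ∧ s2 L + s3 L ≤ L b + L c := by
  have h32 : s3 L ≤ s2 L := getD_sortedDesc_le (by norm_num) (by omega)
  obtain ⟨b, hb, c, hc, hbc⟩ :=
    one_lt_card.1 (lt_card_filter_getD_sortedDesc_le (L := L) (k := 1) (by omega))
  have hcard : #{b, c} < #{i | s3 L ≤ L i} := by
    rw [card_pair hbc]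
    exact lt_card_filter_getD_sortedDesc_le (k := 2) (by omega)
  obtain ⟨a, ha, habc⟩ := exists_mem_notMem_of_card_lt_card hcard
  simp only [mem_filter, mem_univ, true_and] at ha hb hc
  simp only [mem_insert, mem_singleton, not_or] at habc
  change s3 L ≤ L a at ha
  change s2 L ≤ L b at hb
  change s2 L ≤ L c at hc
  exact ⟨a, b, c, habc.1, habc.2, hbc, by linarith, by linarith, by linarith⟩

lemma shortSet_iff {I : Finset (Fin n)} : ShortSet L I ↔ ∑ i ∈ I, L i < (∑ i, L i) / 2 := by
  have := sum_add_sum_compl I L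
  rw [ShortSet]
  constructor <;> intro <;> linarith

lemma ShortSet.mono (hL : ∀ i, 0 ≤ L i) {I J : Finset (Fin n)} (hJ : ShortSet L J)
    (hIJ : I ⊆ J) : ShortSet L I :=
  shortSet_iff.2 <| (sum_le_sum_of_subset_of_nonneg hIJ fun i _ _ => hL i).trans_lt
    (shortSet_iff.1 hJ)

def HeavyPair (L : Fin n → ℝ) (x y : Fin n) : Prop :=
  x ≠ y ∧ (∑ i, L i) / 2 < L x + L y

namespace HeavyPair

variable {x y : Fin n} {I : Finset (Fin n)}

lemma symm (h : HeavyPair L x y) : HeavyPair L y x :=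
  ⟨h.1.symm, by linarith [h.2]⟩

lemma add_le_sum (hL : ∀ i, 0 ≤ L i) (h : HeavyPair L x y) (hx : x ∈ I) (hy : y ∈ I) :
    L x + L y ≤ ∑ i ∈ I, L i := by
  rw [← sum_pair h.1]
  exact sum_le_sum_of_subset_of_nonneg (insert_subset hx (singleton_subset_iff.2 hy))
    fun i _ _ => hL i

lemma notMem_of_shortSet (hL : ∀ i, 0 ≤ L i) (h : HeavyPair L x y) (hI : ShortSet L I)
    (hx : x ∈ I) : y ∉ I := fun hy => by
  linarith [h.2, h.add_le_sum hL hx hy, shortSet_iff.1 hI]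

lemma shortSet_of_notMem (hL : ∀ i, 0 ≤ L i) (h : HeavyPair L x y) (hx : x ∉ I)
    (hy : y ∉ I) : ShortSet L I := by
  have := h.add_le_sum hL (mem_compl.2 hx) (mem_compl.2 hy)
  have := sum_add_sum_compl I L
  rw [ShortSet]
  linarith [h.2]

end HeavyPair

lemma exists_heavyPair_triple (hn : 3 ≤ n) (hs : (∑ i, L i) / 2 < s2 L + s3 L) :
    ∃ a b c : Fin n, HeavyPair L a b ∧ HeavyPair L a c ∧ HeavyPair L b c := by
  obtain ⟨a, b, c, hab, hac, hbc, h1, h2, h3⟩ := exists_s2_add_s3_le_add (L := L) hn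
  exact ⟨a, b, c, ⟨hab, by linarith⟩, ⟨hac, by linarith⟩, ⟨hbc, by linarith⟩⟩

section Cyclic

variable {V W X : LTriple n}

lemma cyclEq_refl (V : LTriple n) : CyclEq V V := Or.inl rfl

lemma cyclEq_rotT (V : LTriple n) : CyclEq V (rotT V) := Or.inr (Or.inl rfl)

lemma CyclEq.symm (h : CyclEq V W) : CyclEq W V := by
  rcases h with rfl | rfl | rfl
  exacts [cyclEq_refl _, Or.inr (Or.inr rfl), cyclEq_rotT _]

lemma CyclEq.trans (h₁ : CyclEq V W) (h₂ : CyclEq W X) : CyclEq V X := by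
  rcases h₁ with rfl | rfl | rfl <;> rcases h₂ with rfl | rfl | rfl <;>
    first | exact Or.inl rfl | exact Or.inr (Or.inl rfl) | exact Or.inr (Or.inr rfl)

namespace IsVertex

lemma rotT (hV : IsVertex L V) : IsVertex L (rotT V) := by
  obtain ⟨h1, h2, h3, h4, h5, h6, h7, h8, h9, h10⟩ := hV
  refine ⟨h2, h3, h1, h5, h6, h4, h9, h7.symm, h8.symm, ?_⟩
  rw [← h10]
  exact (union_comm _ _).trans (union_assoc _ _ _).symm

lemma of_cyclEq (hV : IsVertex L V) (h : CyclEq V W) : IsVertex L W := by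
  rcases h with rfl | rfl | rfl
  exacts [hV, hV.rotT, hV.rotT.rotT]

lemma mem_parts (hV : IsVertex L V) (x : Fin n) : x ∈ V.1 ∨ x ∈ V.2.1 ∨ x ∈ V.2.2 := by
  obtain ⟨-, -, -, -, -, -, -, -, -, hU⟩ := hV
  have hx : x ∈ V.1 ∪ V.2.1 ∪ V.2.2 := hU ▸ mem_univ x
  simpa only [mem_union, or_assoc] using hx

lemma exists_cyclEq_mem_fst (hV : IsVertex L V) (x : Fin n) :
    ∃ V', CyclEq V V' ∧ x ∈ V'.1 := by
  rcases hV.mem_parts x with hx | hx | hx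
  exacts [⟨V, cyclEq_refl V, hx⟩, ⟨_root_.rotT V, cyclEq_rotT V, hx⟩,
    ⟨_root_.rotT (_root_.rotT V), Or.inr (Or.inr rfl), hx⟩]

lemma snd_eq_compl (hV : IsVertex L V) : V.2.1 = (V.1 ∪ V.2.2)ᶜ := by
  obtain ⟨-, -, -, -, -, -, hIJ, -, hJK, hU⟩ := hV
  ext x
  have := hU ▸ mem_univ x
  simp only [mem_union, mem_compl, not_or] at this ⊢
  have := disjoint_left.1 hIJ
  have := disjoint_left.1 hJK
  tauto

lemma of_moveStep (hL : ∀ i, 0 ≤ L i) (hV : IsVertex L V) (hm : MoveStep L V W) :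
    IsVertex L W := by
  obtain ⟨S, hS, hSI, hJS, rfl⟩ := hm
  obtain ⟨-, hJne, hKne, hI, -, hK, hIJ, hIK, hJK, hU⟩ := hV
  refine ⟨sdiff_nonempty.2 (not_subset_of_ssubset hSI), hJne.mono subset_union_left, hKne,
    hI.mono hL sdiff_subset, hJS, hK, ?_, hIK.mono_left sdiff_subset,
    disjoint_union_left.2 ⟨hJK, hIK.mono_left hSI.subset⟩, ?_⟩
  · exact disjoint_union_right.2 ⟨hIJ.mono_left sdiff_subset, sdiff_disjoint⟩
  · rw [← hU]
    ext x
    simp only [mem_union, mem_sdiff]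
    have : x ∈ S → x ∈ V.1 := fun h => hSI.1 h
    tauto

end IsVertex

end Cyclic

section Paths

variable {V W X : LTriple n} {p q : ℕ}

lemma GammaAdj.symm (h : GammaAdj L V W) : GammaAdj L W V :=
  Or.symm h

lemma GammaAdj.congr_left (hV : CyclEq V X) (h : GammaAdj L V W) : GammaAdj L X W := by
  rcases h with ⟨V', W', h₁, h₂, h₃⟩ | ⟨W', V', h₁, h₂, h₃⟩
  exacts [Or.inl ⟨V', W', hV.symm.trans h₁, h₂, h₃⟩, Or.inr ⟨W', V', h₁, h₂, hV.symm.trans h₃⟩]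

lemma GammaAdj.of_moveStep (h : MoveStep L V W) : GammaAdj L V W :=
  Or.inl ⟨V, W, cyclEq_refl V, h, cyclEq_refl W⟩

lemma gammaPath_zero (hV : IsVertex L V) : GammaPath L 0 V V :=
  ⟨fun _ => V, cyclEq_refl V, cyclEq_refl V, fun _ _ => hV,
    fun _ h => absurd h (Nat.not_lt_zero _)⟩

lemma gammaPath_one (hV : IsVertex L V) (hW : IsVertex L W) (h : GammaAdj L V W) :
    GammaPath L 1 V W := by
  refine ⟨fun i => if i = 0 then V else W, cyclEq_refl V, cyclEq_refl W, ?_, ?_⟩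
  · intro i _
    dsimp only
    split_ifs
    exacts [hV, hW]
  · intro i hi
    obtain rfl : i = 0 := by omega
    simpa using h

namespace GammaPath

lemma isVertex_right (h : GammaPath L p V W) : IsVertex L W := by
  obtain ⟨f, -, hW, hf, -⟩ := h
  exact (hf p le_rfl).of_cyclEq hW.symm

lemma congr_left (hV : CyclEq V X) (h : GammaPath L p X W) : GammaPath L p V W := by
  obtain ⟨f, h₁, h₂, h₃, h₄⟩ := h
  exact ⟨f, hV.trans h₁, h₂, h₃, h₄⟩

lemma congr_right (hW : CyclEq W X) (h : GammaPath L p V X) : GammaPath L p V W := by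
  obtain ⟨f, h₁, h₂, h₃, h₄⟩ := h
  exact ⟨f, h₁, hW.trans h₂, h₃, h₄⟩

lemma symm (h : GammaPath L p V W) : GammaPath L p W V := by
  obtain ⟨f, h₁, h₂, h₃, h₄⟩ := h
  refine ⟨fun i => f (p - i), by simpa using h₂, by simpa using h₁,
    fun i _ => h₃ _ (Nat.sub_le _ _), fun i hi => ?_⟩
  have := h₄ (p - (i + 1)) (by omega)
  rw [show p - (i + 1) + 1 = p - i by omega] at this
  exact this.symm

lemma trans (h : GammaPath L p V X) (h' : GammaPath L q X W) : GammaPath L (p + q) V W := by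
  obtain ⟨f, hf₀, hfp, hfV, hfA⟩ := h
  obtain ⟨g, hg₀, hgq, hgV, hgA⟩ := h'
  have hfg : CyclEq (g 0) (f p) := hg₀.symm.trans hfp
  refine ⟨fun i => if i ≤ p then f i else g (i - p), by simpa using hf₀, ?_, fun i hi => ?_,
    fun i hi => ?_⟩
  · rcases Nat.eq_zero_or_pos q with rfl | hq
    · simpa using hgq.trans hfg
    · simpa [show ¬p + q ≤ p by omega] using hgq
  · dsimp only
    split_ifs with hip
    exacts [hfV i hip, hgV _ (by omega)]
  · by_cases hip : i + 1 ≤ p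
    · simpa [hip, show i ≤ p by omega] using hfA i hip
    · have hg := hgA (i - p) (by omega)
      rw [show i - p + 1 = i + 1 - p by omega] at hg
      by_cases hi' : i = p
      · subst hi'
        simpa [hip] using hg.congr_left (by simpa using hfg)
      · simpa [hip, show ¬i ≤ p by omega] using hg

end GammaPath

end Paths

section Orientation

variable {a b c : Fin n} {V W : LTriple n}

def NextPart (a b : Fin n) (V : LTriple n) : Prop :=
  (a ∈ V.1 ∧ b ∈ V.2.1) ∨ (a ∈ V.2.1 ∧ b ∈ V.2.2) ∨ (a ∈ V.2.2 ∧ b ∈ V.1)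

lemma nextPart_rotT : NextPart a b (rotT V) ↔ NextPart a b V := by
  simp only [NextPart, rotT]
  tauto

lemma CyclEq.nextPart_iff (h : CyclEq V W) : NextPart a b V ↔ NextPart a b W := by
  rcases h with rfl | rfl | rfl
  exacts [Iff.rfl, nextPart_rotT.symm, (nextPart_rotT.trans nextPart_rotT).symm]

lemma IsVertex.nextPart_iff (hV : IsVertex L V) (ha : a ∈ V.1) :
    NextPart a b V ↔ b ∈ V.2.1 := by
  obtain ⟨-, -, -, -, -, -, hIJ, hIK, -, -⟩ := hV
  have := disjoint_left.1 hIJ ha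
  have := disjoint_left.1 hIK ha
  simp only [NextPart]
  tauto

lemma notMem_of_moveStep_of_heavyPair (hL : ∀ i, 0 ≤ L i) (hab : HeavyPair L a b)
    (hac : HeavyPair L a c) (hbc : HeavyPair L b c) (hV : IsVertex L V) {S : Finset (Fin n)}
    (hSI : S ⊂ V.1) (hJS : ShortSet L (V.2.1 ∪ S)) : a ∉ S := by
  intro haS
  obtain ⟨-, -, -, hI, -, hK, -, -, -, -⟩ := id hV
  have haI : a ∈ V.1 := hSI.1 haS
  have haJS : a ∈ V.2.1 ∪ S := mem_union_right _ haS
  have hbJ : b ∉ V.2.1 := fun hb => hab.notMem_of_shortSet hL hJS haJS (mem_union_left _ hb)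
  have hcJ : c ∉ V.2.1 := fun hc => hac.notMem_of_shortSet hL hJS haJS (mem_union_left _ hc)
  have hbK : b ∈ V.2.2 := by
    have := hab.notMem_of_shortSet hL hI haI
    have := hV.mem_parts b
    tauto
  have hcK : c ∈ V.2.2 := by
    have := hac.notMem_of_shortSet hL hI haI
    have := hV.mem_parts c
    tauto
  exact hbc.notMem_of_shortSet hL hK hbK hcK

lemma MoveStep.nextPart_iff (hL : ∀ i, 0 ≤ L i) (hab : HeavyPair L a b)
    (hac : HeavyPair L a c) (hbc : HeavyPair L b c) (hV : IsVertex L V)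
    (hm : MoveStep L V W) : NextPart a b V ↔ NextPart a b W := by
  obtain ⟨S, -, hSI, hJS, rfl⟩ := hm
  have ha := notMem_of_moveStep_of_heavyPair hL hab hac hbc hV hSI hJS
  have hb := notMem_of_moveStep_of_heavyPair hL hab.symm hbc hac hV hSI hJS
  simp only [NextPart, mem_sdiff, mem_union, ha, hb, not_false_eq_true, and_true, or_false]

lemma GammaAdj.nextPart_iff (hL : ∀ i, 0 ≤ L i) (hab : HeavyPair L a b)
    (hac : HeavyPair L a c) (hbc : HeavyPair L b c) (hV : IsVertex L V) (hW : IsVertex L W)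
    (h : GammaAdj L V W) : NextPart a b V ↔ NextPart a b W := by
  rcases h with ⟨V', W', hV', hm, hW'⟩ | ⟨W', V', hW', hm, hV'⟩
  · exact hV'.nextPart_iff.trans <|
      (hm.nextPart_iff hL hab hac hbc (hV.of_cyclEq hV')).trans hW'.nextPart_iff.symm
  · exact hV'.nextPart_iff.trans <|
      (hm.nextPart_iff hL hab hac hbc (hW.of_cyclEq hW')).symm.trans hW'.nextPart_iff.symm

lemma GammaPath.nextPart_iff {p : ℕ} (hL : ∀ i, 0 ≤ L i) (hab : HeavyPair L a b)
    (hac : HeavyPair L a c) (hbc : HeavyPair L b c) (h : GammaPath L p V W) :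
    NextPart a b V ↔ NextPart a b W := by
  obtain ⟨f, h₀, hp, hf, hadj⟩ := h
  have key : ∀ i ≤ p, NextPart a b (f 0) ↔ NextPart a b (f i) := by
    intro i
    induction i with
    | zero => exact fun _ => Iff.rfl
    | succ i ih =>
      intro hi
      exact (ih (by omega)).trans <| (hadj i hi).nextPart_iff hL hab hac hbc
        (hf i (by omega)) (hf (i + 1) hi)
  exact h₀.nextPart_iff.trans <| (key p le_rfl).trans hp.nextPart_iff.symm

end Orientation

section Navigation

variable {a b c x : Fin n} {V : LTriple n}

lemma exists_gammaPath_le_one_singleton_fst (hL : ∀ i, 0 ≤ L i) (hV : IsVertex L V)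
    (hx : x ∈ V.1) (hshort : ShortSet L (V.2.1 ∪ (V.1 \ {x}))) :
    ∃ p ≤ 1, GammaPath L p V ({x}, V.2.1 ∪ (V.1 \ {x}), V.2.2) := by
  by_cases h : V.1 = {x}
  · have hVeq : (({x}, V.2.1 ∪ (V.1 \ {x}), V.2.2) : LTriple n) = V :=
      Prod.ext h.symm (Prod.ext (by simp [h]) rfl)
    refine ⟨0, zero_le_one, ?_⟩
    rw [hVeq]
    exact gammaPath_zero hV
  · have hm : MoveStep L V ({x}, V.2.1 ∪ (V.1 \ {x}), V.2.2) := by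
      refine ⟨V.1 \ {x}, ?_, sdiff_ssubset (singleton_subset_iff.2 hx) (singleton_nonempty x),
        hshort, ?_⟩
      · exact sdiff_nonempty.2 fun hsub => h (hsub.antisymm (singleton_subset_iff.2 hx))
      · rw [sdiff_sdiff_right_self, inf_eq_inter, inter_singleton_of_mem hx]
    exact ⟨1, le_rfl, gammaPath_one hV (hV.of_moveStep hL hm) (.of_moveStep hm)⟩

def canonicalVertex (a b : Fin n) : LTriple n := ({a}, {b}, {a, b}ᶜ)

lemma exists_gammaPath_le_two_canonicalVertex_of_mem (hL : ∀ i, 0 ≤ L i)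
    (hab : HeavyPair L a b) (hac : HeavyPair L a c) (hV : IsVertex L V) (ha : a ∈ V.1)
    (hb : b ∈ V.2.1) (hc : c ∈ V.2.2) :
    ∃ p ≤ 2, GammaPath L p V (canonicalVertex a b) := by
  obtain ⟨-, -, -, -, -, -, hIJ, hIK, hJK, -⟩ := id hV
  set J₁ := V.2.1 ∪ (V.1 \ {a})
  have haJ₁ : a ∉ J₁ := by simp [J₁, disjoint_left.1 hIJ ha]
  have hcJ₁ : c ∉ J₁ := by simp [J₁, disjoint_right.1 hJK hc, disjoint_right.1 hIK hc]
  obtain ⟨p, hp, hP⟩ := exists_gammaPath_le_one_singleton_fst hL hV ha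
    (hac.shortSet_of_notMem hL haJ₁ hcJ₁)
  set K₂ := V.2.2 ∪ (J₁ \ {b})
  have haK₂ : a ∉ K₂ := by simp [K₂, haJ₁, disjoint_left.1 hIK ha]
  have hbK₂ : b ∉ K₂ := by simp [K₂, disjoint_left.1 hJK hb]
  obtain ⟨q, hq, hQ⟩ : ∃ q ≤ 1, GammaPath L q (rotT ({a}, J₁, V.2.2)) ({b}, K₂, {a}) :=
    exists_gammaPath_le_one_singleton_fst hL hP.isVertex_right.rotT (mem_union_left _ hb)
      (hab.shortSet_of_notMem hL haK₂ hbK₂)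
  have hK₂ : K₂ = {a, b}ᶜ := by
    rw [insert_eq, union_comm]
    exact hQ.isVertex_right.snd_eq_compl
  refine ⟨p + q, by omega, (hP.trans (hQ.congr_left (cyclEq_rotT _))).congr_right ?_⟩
  rw [hK₂]
  exact cyclEq_rotT _

open Classical in
lemma exists_gammaPath_le_two_canonicalVertex (hL : ∀ i, 0 ≤ L i) (hab : HeavyPair L a b)
    (hac : HeavyPair L a c) (hbc : HeavyPair L b c) (hV : IsVertex L V) :
    ∃ p ≤ 2, GammaPath L p V
      (if NextPart a b V then canonicalVertex a b else canonicalVertex a c) := by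
  obtain ⟨V', hVV', ha⟩ := hV.exists_cyclEq_mem_fst a
  have hV' := hV.of_cyclEq hVV'
  obtain ⟨-, -, -, hI, hJ, hK, -, -, -, -⟩ := id hV'
  have hb : b ∉ V'.1 := hab.notMem_of_shortSet hL hI ha
  have hc : c ∉ V'.1 := hac.notMem_of_shortSet hL hI ha
  have hbc₂ : b ∈ V'.2.1 → c ∉ V'.2.1 := hbc.notMem_of_shortSet hL hJ
  have hbc₃ : b ∈ V'.2.2 → c ∉ V'.2.2 := hbc.notMem_of_shortSet hL hK
  have hb' := hV'.mem_parts b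
  have hc' := hV'.mem_parts c
  rw [hVV'.nextPart_iff, hV'.nextPart_iff ha]
  split_ifs with hbJ
  · obtain ⟨p, hp, hP⟩ := exists_gammaPath_le_two_canonicalVertex_of_mem hL hab hac hV' ha hbJ
      (by tauto)
    exact ⟨p, hp, hP.congr_left hVV'⟩
  · obtain ⟨p, hp, hP⟩ := exists_gammaPath_le_two_canonicalVertex_of_mem hL hac hab hV' ha
      (by tauto) (by tauto)
    exact ⟨p, hp, hP.congr_left hVV'⟩

end Navigation

theorem navigation_at_most_7_same_component_general (n : ℕ) (hn : 3 ≤ n) (L : Fin n → ℝ)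
    (hpos : ∀ i, 0 < L i)
    (hs : (∑ i, L i) / 2 < s2 L + s3 L) :
    ∀ V W : LTriple n, IsVertex L V → IsVertex L W →
      (∃ m, GammaPath L m V W) → ∃ m ≤ 7, GammaPath L m V W := by
  intro V W hV hW ⟨m, hVW⟩
  have hL : ∀ i, 0 ≤ L i := fun i => (hpos i).le
  obtain ⟨a, b, c, hab, hac, hbc⟩ := exists_heavyPair_triple hn hs
  obtain ⟨p, hp, hP⟩ := exists_gammaPath_le_two_canonicalVertex hL hab hac hbc hV
  obtain ⟨q, hq, hQ⟩ := exists_gammaPath_le_two_canonicalVertex hL hab hac hbc hW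
  rw [← hVW.nextPart_iff hL hab hac hbc] at hQ
  exact ⟨p + q, by omega, hP.trans hQ.symm⟩

/-- If `L` is generic, satisfies the triangle inequality, and
`s₂ + s₃ > (l₁ + ⋯ + lₙ)/2`, then any two vertices of `Γ(L)` lying in the same
connected component of `Γ(L)` are joined by a path of length at most 7. -/
theorem navigation_at_most_7_same_component (n : ℕ) (hn : 3 ≤ n) (L : Fin n → ℝ)
    (hpos : ∀ i, 0 < L i) (hgen : GenericVec L) (htri : TriangleIneq L)
    (hs : (∑ i, L i) / 2 < s2 L + s3 L) :
    ∀ V W : LTriple n, IsVertex L V → IsVertex L W →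
      (∃ m, GammaPath L m V W) → ∃ m ≤ 7, GammaPath L m V W :=
  navigation_at_most_7_same_component_general n hn L hpos hs
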